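/- Let P be a probability distribution on an instance space X, let the per-instance loss satisfy 0 ≤ ℓ(θ; x) ≤ 1 for every θ ∈ Θ and P-almost every x, let D = (x_1, …, x_n) be an i.i.d. sample from P^n, and let A = A(D) be any (possibly randomized) data-dependent random variable taking values in Θ. Then the expected generalization gap satisfies |E[L_P(A) − L̂_D(A)]| ≤ sqrt( I(A; D) / (2n) ), where I(A; D) is the mutual information between A and the dataset D. -/

import Mathlib

/-!
Let `ρ` be the joint law of `(A, D)`, `ν` the law of `A`, and `g θ d` the generalization gap of
`θ` on the sample `d`, so that the left-hand side is `|E_ρ g|` and `I(A; D) = KL(ρ ‖ ν ⊗ Pⁿ)`.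
The Donsker–Varadhan inequality gives `t E_ρ g ≤ KL(ρ ‖ ν ⊗ Pⁿ) + log E_{ν ⊗ Pⁿ} exp (t g)` for
every `t`. Under `ν ⊗ Pⁿ` the sample is independent of `θ`, so by Hoeffding's lemma `g` is
sub-Gaussian with variance proxy `1 / (4n)`; optimising over `t` yields `|E_ρ g| ≤ √(KL / (2n))`.
-/

open MeasureTheory ProbabilityTheory
open scoped ENNReal

open Classical in
/-- The Kullback–Leibler divergence between two measures, valued in `ℝ≥0∞`:
it is `∫ log (dμ/dν) dμ` when `μ ≪ ν` and the log-likelihood ratio is integrable,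
and `∞` otherwise. -/
noncomputable def klDiv {α : Type*} [MeasurableSpace α] (μ ν : Measure α) : ℝ≥0∞ :=
  if μ ≪ ν ∧ Integrable (llr μ ν) μ then ENNReal.ofReal (∫ x, llr μ ν x ∂μ) else ⊤

/-- The mutual information `I(U; V)` between two random variables: the KL divergence
between their joint law and the product of their marginal laws. -/
noncomputable def mutualInfo {Ω α β : Type*} [MeasurableSpace Ω] [MeasurableSpace α]
    [MeasurableSpace β] (μ : Measure Ω) (U : Ω → α) (V : Ω → β) : ℝ≥0∞ :=
  klDiv (μ.map fun ω => (U ω, V ω)) ((μ.map U).prod (μ.map V))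

open Real Set
open scoped NNReal

lemma sq_le_two_mul_mul_of_forall_mul_le {E K c : ℝ} (hc : 0 ≤ c)
    (h : ∀ t, t * E ≤ K + c * t ^ 2 / 2) : E ^ 2 ≤ 2 * c * K := by
  rcases hc.eq_or_lt with rfl | hc
  · by_contra hlt
    have hE : E ≠ 0 := by rintro rfl; simp at hlt
    have := h ((|K| + 1) / E)
    rw [div_mul_cancel₀ _ hE] at this
    linarith [le_abs_self K]
  · have := h (E / c)
    field_simp at this
    nlinarith

section KL

variable {α : Type*} [MeasurableSpace α] {ρ ν : Measure α} [IsProbabilityMeasure ρ]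
  [IsProbabilityMeasure ν]

lemma integral_le_integral_llr_add_log_integral_exp (hρν : ρ ≪ ν)
    (hllr : Integrable (llr ρ ν) ρ) {f : α → ℝ} (hfρ : Integrable f ρ)
    (hfν : Integrable (fun x ↦ exp (f x)) ν) :
    ∫ x, f x ∂ρ ≤ ∫ x, llr ρ ν x ∂ρ + log (∫ x, exp (f x) ∂ν) := by
  have := isProbabilityMeasure_tilted hfν
  have hρ_tilted : ρ ≪ ν.tilted f := hρν.trans (absolutelyContinuous_tilted hfν)
  have hgibbs := InformationTheory.integral_llr_add_sub_measure_univ_nonneg hρ_tilted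
    (integrable_llr_tilted_right hρν hfρ hllr hfν)
  rw [integral_llr_tilted_right hρν hfρ hfν hllr] at hgibbs
  simp only [probReal_univ] at hgibbs
  linarith

lemma abs_integral_le_sqrt_of_hasSubgaussianMGF {f : α → ℝ} {c : ℝ≥0}
    (hf : HasSubgaussianMGF f c ν) (hρν : ρ ≪ ν) (hllr : Integrable (llr ρ ν) ρ)
    (hfρ : Integrable f ρ) :
    |∫ x, f x ∂ρ| ≤ √(2 * c * ∫ x, llr ρ ν x ∂ρ) := by
  refine abs_le_sqrt (sq_le_two_mul_mul_of_forall_mul_le c.2 fun t ↦ ?_)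
  have hdv := integral_le_integral_llr_add_log_integral_exp hρν hllr (hfρ.const_mul t)
    (hf.integrable_exp_mul t)
  rw [integral_const_mul] at hdv
  have hcgf : log (∫ x, exp (t * f x) ∂ν) ≤ c * t ^ 2 / 2 := hf.cgf_le t
  linarith

end KL

lemma ProbabilityTheory.HasSubgaussianMGF.prod_of_forall {α β : Type*} [MeasurableSpace α]
    [MeasurableSpace β] {μ : Measure α} {ν : Measure β} [IsProbabilityMeasure μ] [SFinite ν] {g : α × β → ℝ}
    (hg : Measurable g) {c : ℝ≥0} (h : ∀ a, HasSubgaussianMGF (fun b ↦ g (a, b)) c ν) :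
    HasSubgaussianMGF g c (μ.prod ν) := by
  have hmgf_meas (t : ℝ) : Measurable fun a ↦ ∫ b, exp (t * g (a, b)) ∂ν :=
    (hg.const_mul t).exp.stronglyMeasurable.integral_prod_right'.measurable
  have hint (t : ℝ) : Integrable (fun z ↦ exp (t * g z)) (μ.prod ν) := by
    refine (integrable_prod_iff (hg.const_mul t).exp.aestronglyMeasurable).2
      ⟨ae_of_all _ fun a ↦ (h a).integrable_exp_mul t, ?_⟩
    refine Integrable.mono' (integrable_const (exp (c * t ^ 2 / 2)))
      ?_ (ae_of_all _ fun a ↦ ?_)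
    · simp only [norm_eq_abs, abs_exp]
      exact (hmgf_meas t).aestronglyMeasurable
    · simp only [norm_eq_abs, abs_exp]
      rw [abs_of_nonneg (integral_nonneg fun _ ↦ (exp_pos _).le)]
      exact (h a).mgf_le t
  refine ⟨hint, fun t ↦ ?_⟩
  calc mgf g (μ.prod ν) t = ∫ a, mgf (fun b ↦ g (a, b)) ν t ∂μ := integral_prod _ (hint t)
    _ ≤ ∫ _, exp (c * t ^ 2 / 2) ∂μ :=
        integral_mono_of_nonneg (ae_of_all _ fun _ ↦ mgf_nonneg) (integrable_const _)
          (ae_of_all _ fun a ↦ (h a).mgf_le t)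
    _ = exp (c * t ^ 2 / 2) := by simp

section GeneralizationGap

variable {𝒳 : Type*} [MeasurableSpace 𝒳] {P : Measure 𝒳} {n : ℕ}

noncomputable def generalizationGap (P : Measure 𝒳) (f : 𝒳 → ℝ) (d : Fin n → 𝒳) : ℝ :=
  (∫ x, f x ∂P) - (∑ i, f (d i)) / n

lemma measurable_generalizationGap [SFinite P] {Θ : Type*} [MeasurableSpace Θ] {ℓ : Θ → 𝒳 → ℝ}
    (hℓ : Measurable (Function.uncurry ℓ)) :
    Measurable fun z : Θ × (Fin n → 𝒳) ↦ generalizationGap P (ℓ z.1) z.2 := by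
  have hL : Measurable fun θ ↦ ∫ x, ℓ θ x ∂P :=
    hℓ.stronglyMeasurable.integral_prod_right'.measurable
  refine (hL.comp measurable_fst).sub (Measurable.div_const ?_ _)
  exact Finset.measurable_sum _ fun i _ ↦
    hℓ.comp (measurable_fst.prodMk ((measurable_pi_apply i).comp measurable_snd))

variable [IsProbabilityMeasure P] {a b : ℝ}

lemma hasSubgaussianMGF_generalizationGap {f : 𝒳 → ℝ} (hn : 0 < n) (hf : AEMeasurable f P)
    (hab : ∀ᵐ x ∂P, f x ∈ Icc a b) :
    HasSubgaussianMGF (generalizationGap P f) ((‖b - a‖₊ / 2) ^ 2 / n)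
      (Measure.pi fun _ : Fin n ↦ P) := by
  set c : ℝ≥0 := (‖b - a‖₊ / 2) ^ 2
  have hterm (i : Fin n) : HasSubgaussianMGF (fun d : Fin n → 𝒳 ↦ f (d i) - P[f]) c
      (Measure.pi fun _ ↦ P) := by
    refine HasSubgaussianMGF.of_map (X := fun x ↦ f x - P[f]) (Y := fun d : Fin n → 𝒳 ↦ d i)
      (μ := Measure.pi fun _ ↦ P) (measurable_pi_apply i).aemeasurable ?_
    rw [(measurePreserving_eval (fun _ : Fin n ↦ P) i).map_eq]
    exact hasSubgaussianMGF_of_mem_Icc hf hab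
  have hsum := (HasSubgaussianMGF.sum_of_iIndepFun
    (iIndepFun_pi fun _ ↦ hf.sub_const P[f]) (s := Finset.univ) fun i _ ↦ hterm i).const_mul
    (-(n : ℝ)⁻¹)
  have hn' : (n : ℝ) ≠ 0 := by positivity
  convert hsum using 1
  · ext d
    simp only [generalizationGap, Finset.sum_sub_distrib, Finset.sum_const, Finset.card_univ,
      Fintype.card_fin, nsmul_eq_mul]
    field_simp
    ring
  · apply NNReal.eq
    change ((c / n : ℝ≥0) : ℝ) = (-(n : ℝ)⁻¹) ^ 2 * ((∑ _i : Fin n, c : ℝ≥0) : ℝ)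
    simp only [NNReal.coe_div, NNReal.coe_natCast, even_two, Even.neg_pow, inv_pow,
      Finset.sum_const, Finset.card_univ, Fintype.card_fin, nsmul_eq_mul, NNReal.coe_mul]
    field_simp

lemma abs_generalizationGap_le {f : 𝒳 → ℝ} (hn : 0 < n) (hf : AEMeasurable f P)
    (hab : ∀ᵐ x ∂P, f x ∈ Icc a b) :
    ∀ᵐ d ∂(Measure.pi fun _ : Fin n ↦ P), |generalizationGap P f d| ≤ b - a := by
  have hmean : P[f] ∈ Icc a b := by
    have hfi := Integrable.of_mem_Icc a b hf hab
    constructor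
    · simpa using integral_mono_ae (integrable_const a) hfi (hab.mono fun _ hx ↦ hx.1)
    · simpa using integral_mono_ae hfi (integrable_const b) (hab.mono fun _ hx ↦ hx.2)
  have hsample : ∀ᵐ d ∂(Measure.pi fun _ : Fin n ↦ P), ∀ i, f (d i) ∈ Icc a b :=
    ae_all_iff.2 fun i ↦
      (Measure.tendsto_eval_ae_ae (μ := fun _ : Fin n ↦ P) (i := i)).eventually hab
  filter_upwards [hsample] with d hd
  have hn' : (0 : ℝ) < n := by positivity
  have hlo : a ≤ (∑ i, f (d i)) / n := by
    rw [le_div_iff₀ hn']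
    simpa [mul_comm] using Finset.card_nsmul_le_sum Finset.univ _ a fun i _ ↦ (hd i).1
  have hhi : (∑ i, f (d i)) / n ≤ b := by
    rw [div_le_iff₀ hn']
    simpa [mul_comm] using Finset.sum_le_card_nsmul Finset.univ _ b fun i _ ↦ (hd i).2
  rw [generalizationGap, abs_le]
  constructor <;> linarith [hmean.1, hmean.2]

lemma abs_integral_generalizationGap_le_sqrt {Θ : Type*} [MeasurableSpace Θ] {ℓ : Θ → 𝒳 → ℝ}
    (hn : 0 < n) (hℓ : Measurable (Function.uncurry ℓ)) (hbound : ∀ θ, ∀ᵐ x ∂P, ℓ θ x ∈ Icc a b)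
    {ν : Measure Θ} [IsProbabilityMeasure ν] {ρ : Measure (Θ × (Fin n → 𝒳))}
    [IsProbabilityMeasure ρ] (hρν : ρ ≪ ν.prod (Measure.pi fun _ ↦ P))
    (hllr : Integrable (llr ρ (ν.prod (Measure.pi fun _ ↦ P))) ρ) :
    |∫ z, generalizationGap P (ℓ z.1) z.2 ∂ρ|
      ≤ √((b - a) ^ 2 * (∫ z, llr ρ (ν.prod (Measure.pi fun _ ↦ P)) z ∂ρ) / (2 * n)) := by
  have hℓθ (θ : Θ) : AEMeasurable (ℓ θ) P := (hℓ.comp measurable_prodMk_left).aemeasurable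
  have hg := measurable_generalizationGap (P := P) (n := n) hℓ
  have hsubG := HasSubgaussianMGF.prod_of_forall (μ := ν) hg fun θ ↦
    hasSubgaussianMGF_generalizationGap hn (hℓθ θ) (hbound θ)
  have hbdd : ∀ᵐ z ∂ρ, ‖generalizationGap P (ℓ z.1) z.2‖ ≤ b - a :=
    hρν.ae_le <| (Measure.ae_prod_mem_iff_ae_ae_mem (measurableSet_le hg.norm measurable_const)).2
      (ae_of_all _ fun θ ↦ abs_generalizationGap_le hn (hℓθ θ) (hbound θ))
  refine (abs_integral_le_sqrt_of_hasSubgaussianMGF hsubG hρν hllr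
    (.of_bound hg.aestronglyMeasurable _ hbdd)).trans_eq ?_
  congr 1
  push_cast
  rw [Real.norm_eq_abs, div_pow, sq_abs]
  field_simp

end GeneralizationGap

/-- Information-theoretic generalization bound: for an i.i.d. dataset
`D ∼ P^n`, a `[0,1]`-valued loss (`P`-a.e.), and any data-dependent output `A`,
`|E[L_P(A) − L̂_D(A)]| ≤ √(I(A; D) / (2n))`. -/
theorem expected_generalization_gap_le_sqrt_mutualInfo
    {Ω 𝒳 Θ : Type*} [MeasurableSpace Ω] [MeasurableSpace 𝒳] [MeasurableSpace Θ]
    (μ : Measure Ω) [IsProbabilityMeasure μ]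
    (P : Measure 𝒳) [IsProbabilityMeasure P]
    (n : ℕ) (hn : 0 < n)
    (ℓ : Θ → 𝒳 → ℝ) (hℓ : Measurable (Function.uncurry ℓ))
    (hbound : ∀ θ : Θ, ∀ᵐ x ∂P, ℓ θ x ∈ Set.Icc (0 : ℝ) 1)
    (D : Ω → Fin n → 𝒳) (hD : Measurable D)
    (hDlaw : μ.map D = Measure.pi fun _ : Fin n => P)
    (A : Ω → Θ) (hA : Measurable A) :
    ENNReal.ofReal
        |∫ ω, ((∫ x, ℓ (A ω) x ∂P) - (∑ i, ℓ (A ω) (D ω i)) / n) ∂μ|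
      ≤ (mutualInfo μ A D / (2 * n)) ^ (1/2 : ℝ) := by
  set Pn := Measure.pi fun _ : Fin n ↦ P
  set ρ := μ.map fun ω ↦ (A ω, D ω)
  set ν := μ.map A
  have := Measure.isProbabilityMeasure_map (μ := μ) hA.aemeasurable
  have := Measure.isProbabilityMeasure_map (μ := μ) (hA.prodMk hD).aemeasurable
  have hmi : mutualInfo μ A D = klDiv ρ (ν.prod Pn) := by rw [mutualInfo, hDlaw]
  by_cases hKL : ρ ≪ ν.prod Pn ∧ Integrable (llr ρ (ν.prod Pn)) ρ
  swap
  · rw [hmi, klDiv, if_neg hKL, ENNReal.top_div_of_ne_top (by finiteness),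
      ENNReal.top_rpow_of_pos (by norm_num)]
    exact le_top
  obtain ⟨hρν, hllr⟩ := hKL
  have hK : 0 ≤ ∫ z, llr ρ (ν.prod Pn) z ∂ρ := by
    simpa using InformationTheory.integral_llr_add_sub_measure_univ_nonneg hρν hllr
  have h2n : (2 * n : ℝ≥0∞) = ENNReal.ofReal (2 * n) := by
    rw [ENNReal.ofReal_mul zero_le_two]; simp
  calc ENNReal.ofReal |∫ ω, ((∫ x, ℓ (A ω) x ∂P) - (∑ i, ℓ (A ω) (D ω i)) / n) ∂μ|
      = ENNReal.ofReal |∫ z, generalizationGap P (ℓ z.1) z.2 ∂ρ| := by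
        rw [integral_map (hA.prodMk hD).aemeasurable
          (measurable_generalizationGap hℓ).aestronglyMeasurable]; rfl
    _ ≤ ENNReal.ofReal √((1 - 0) ^ 2 * (∫ z, llr ρ (ν.prod Pn) z ∂ρ) / (2 * n)) :=
        ENNReal.ofReal_le_ofReal (abs_integral_generalizationGap_le_sqrt hn hℓ hbound hρν hllr)
    _ = (mutualInfo μ A D / (2 * n)) ^ (1/2 : ℝ) := by
        rw [hmi, klDiv, if_pos ⟨hρν, hllr⟩, h2n, ← ENNReal.ofReal_div_of_pos (by positivity),
          ENNReal.ofReal_rpow_of_nonneg (by positivity) (by norm_num), ← sqrt_eq_rpow]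
        norm_num
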